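/- arXiv:2512.24580 — 4 statements merged into one kernel-verified Lean document; each statement's English description precedes it below -/
import Mathlib

section
/- For any K-dimensional Dirichlet parameter α with all entries positive and any vector m of nonnegative integers, there exists a coupling (Y, Z) with Y ~ Dirichlet(α) and Z ~ Dirichlet(α + m) such that E[∑_{i=1}^K |Y_i - Z_i|] ≤ 2·ln(1 + (∑_i m_i)/(∑_i α_i)). Equivalently, the 1-Wasserstein distance between Dirichlet(α) and Dirichlet(α+m) with respect to the ℓ¹ cost is at most 2·ln(1 + (∑_i m_i)/(∑_i α_i)). -/
/-!
Take independent `G i ~ Gamma(α i)` and `E i ~ Gamma(m i)` (a point mass at `0` when `m i = 0`).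
Then `G / ∑ G ~ Dirichlet(α)`, and since Gamma laws of equal rate convolve by adding shapes,
`(G + E) / ∑ (G + E) ~ Dirichlet(α + m)`. Pointwise, the `ℓ¹` distance between these two
normalized vectors is at most `2 S / (T + S)`, where `T = ∑ G ~ Gamma(A)` and
`S = ∑ E ~ Gamma(M)` are independent, `A = ∑ α`, `M = ∑ m`. Since
`s · Gamma(M)(ds) = M · Gamma(M + 1)(ds)`, we get `E[S / (T + S)] = M · E[1 / U]` with
`U ~ Gamma(A + M + 1)`, which is `M / (A + M) ≤ log (1 + M / A)`.
-/

open MeasureTheory ProbabilityTheory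

/-- The Dirichlet law with parameter `α` on `Fin K → ℝ`, defined as the law of the
normalized vector of independent Gamma(α i, 1) random variables. -/
noncomputable def dirichletLaw {K : ℕ} (α : Fin K → ℝ) (hα : ∀ i, 0 < α i) :
    Measure (Fin K → ℝ) :=
  haveI : ∀ i, IsProbabilityMeasure (gammaMeasure (α i) 1) :=
    fun i => isProbabilityMeasure_gammaMeasure (hα i) one_pos
  (Measure.pi fun i => gammaMeasure (α i) 1).map
    (fun g i => g i / ∑ j, g j)

section

open Real Set Measure
open scoped ENNReal

theorem integral_rpow_mul_sub_rpow {a b u : ℝ} (ha : 0 < a) (hb : 0 < b) (hu : 0 < u) :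
    ∫ t in 0..u, t ^ (a - 1) * (u - t) ^ (b - 1)
      = Gamma a * Gamma b / Gamma (a + b) * u ^ (a + b - 1) := by
  have hΓ : Complex.Gamma ((a + b : ℝ) : ℂ) ≠ 0 := by
    rw [Complex.Gamma_ofReal]; exact_mod_cast (Gamma_pos_of_pos (add_pos ha hb)).ne'
  have hbeta := Complex.Gamma_mul_Gamma_eq_betaIntegral (s := a) (t := b) (by simpa) (by simpa)
  apply Complex.ofReal_injective
  rw [← intervalIntegral.integral_ofReal]
  calc ∫ t in 0..u, ((t ^ (a - 1) * (u - t) ^ (b - 1) : ℝ) : ℂ)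
      = ∫ t in 0..u, (t : ℂ) ^ ((a : ℂ) - 1) * ((u : ℂ) - t) ^ ((b : ℂ) - 1) := by
        refine intervalIntegral.integral_congr fun t ht => ?_
        rw [uIcc_of_le hu.le] at ht
        simp only [Complex.ofReal_mul, Complex.ofReal_cpow ht.1,
          Complex.ofReal_cpow (sub_nonneg.2 ht.2)]
        push_cast; ring
    _ = _ := by
      rw [Complex.betaIntegral_scaled a b hu]
      push_cast [Complex.ofReal_cpow hu.le, ← Complex.Gamma_ofReal] at hΓ ⊢
      rw [hbeta]
      field_simp

theorem gammaPDF_mul_gammaPDF_sub {a r : ℝ} (ha : 0 < a) (hr : 0 < r) (b u t : ℝ) :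
    gammaPDF a r t * gammaPDF b r (u - t) = (Icc 0 u).indicator (fun t => ENNReal.ofReal
      (r ^ a / Gamma a * (r ^ b / Gamma b) * exp (-(r * u)) *
        (t ^ (a - 1) * (u - t) ^ (b - 1)))) t := by
  by_cases ht : t ∈ Icc 0 u
  · have hΓa := Gamma_pos_of_pos ha
    have ht₀ := ht.1
    rw [indicator_of_mem ht, gammaPDF_of_nonneg ht.1, gammaPDF_of_nonneg (sub_nonneg.2 ht.2),
      ← ENNReal.ofReal_mul (by positivity)]
    have hexp : exp (-(r * t)) * exp (-(r * (u - t))) = exp (-(r * u)) := by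
      rw [← exp_add]; ring_nf
    congr 1
    linear_combination
      (r ^ a / Gamma a * (r ^ b / Gamma b) * (t ^ (a - 1) * (u - t) ^ (b - 1))) * hexp
  · rw [indicator_of_notMem ht]
    rcases not_and_or.1 ht with ht | ht
    · rw [gammaPDF_of_neg (not_le.1 ht), zero_mul]
    · rw [gammaPDF_of_neg (x := u - t) (by linarith [not_le.1 ht]), mul_zero]

theorem lconvolution_gammaPDF {a b r u : ℝ} (ha : 0 < a) (hb : 0 < b) (hr : 0 < r)
    (hu : u ≠ 0) : (gammaPDF a r ⋆ₗ gammaPDF b r) u = gammaPDF (a + b) r u := by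
  simp_rw [lconvolution_def, neg_add_eq_sub, gammaPDF_mul_gammaPDF_sub ha hr b u]
  rcases hu.lt_or_gt with hu | hu
  · simp [Icc_eq_empty_of_lt hu, gammaPDF_of_neg hu]
  have hΓa := Gamma_pos_of_pos ha
  have hΓb := Gamma_pos_of_pos hb
  have hbeta := integral_rpow_mul_sub_rpow ha hb hu
  -- the integral is nonzero, so the integrand is integrable
  have hint : IntegrableOn (fun t => t ^ (a - 1) * (u - t) ^ (b - 1)) (Icc 0 u) := by
    refine (integrableOn_Icc_iff_integrableOn_Ioc).2 <|
      (intervalIntegrable_iff_integrableOn_Ioc_of_le hu.le).1 <|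
      intervalIntegral.intervalIntegrable_of_integral_ne_zero ?_
    have := Gamma_pos_of_pos (add_pos ha hb)
    rw [hbeta]
    positivity
  rw [lintegral_indicator measurableSet_Icc,
    ← ofReal_integral_eq_lintegral_ofReal (hint.const_mul _), integral_const_mul,
    integral_Icc_eq_integral_Ioc, ← intervalIntegral.integral_of_le hu.le, hbeta,
    gammaPDF_of_nonneg hu.le, rpow_add hr]
  · congr 1
    field_simp
  · filter_upwards [ae_restrict_mem measurableSet_Icc] with t ht
    have := rpow_nonneg ht.1 (a - 1)
    have := rpow_nonneg (sub_nonneg.2 ht.2) (b - 1)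
    positivity

@[fun_prop]
theorem measurable_gammaPDF (a r : ℝ) : Measurable (gammaPDF a r) :=
  (measurable_gammaPDFReal a r).ennreal_ofReal

theorem gammaMeasure_conv_gammaMeasure {a b r : ℝ} (ha : 0 < a) (hb : 0 < b) (hr : 0 < r) :
    gammaMeasure a r ∗ gammaMeasure b r = gammaMeasure (a + b) r := by
  rw [gammaMeasure, gammaMeasure,
    conv_withDensity_eq_lconvolution (measurable_gammaPDF a r) (measurable_gammaPDF b r)]
  refine withDensity_congr_ae ?_
  filter_upwards [Measure.ae_ne volume 0] with u hu using lconvolution_gammaPDF ha hb hr hu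

theorem gammaMeasure_Iic_zero (a r : ℝ) : gammaMeasure a r (Iic 0) = 0 := by
  rw [gammaMeasure, withDensity_apply _ measurableSet_Iic,
    Measure.restrict_congr_set Iio_ae_eq_Iic.symm]
  exact lintegral_gammaPDF_of_nonpos le_rfl

/-- `Gamma(c, 1)`, taken to be the point mass at `0` for `c ≤ 0` so that shapes `c ≥ 0` add
under convolution. -/
noncomputable def gammaLaw (c : ℝ) : Measure ℝ :=
  if 0 < c then gammaMeasure c 1 else dirac 0

theorem gammaLaw_of_pos {c : ℝ} (hc : 0 < c) : gammaLaw c = gammaMeasure c 1 :=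
  if_pos hc

theorem gammaLaw_of_nonpos {c : ℝ} (hc : c ≤ 0) : gammaLaw c = dirac 0 :=
  if_neg hc.not_gt

instance (c : ℝ) : IsProbabilityMeasure (gammaLaw c) := by
  rcases lt_or_ge 0 c with hc | hc
  · rw [gammaLaw_of_pos hc]; exact isProbabilityMeasure_gammaMeasure hc one_pos
  · rw [gammaLaw_of_nonpos hc]; infer_instance

theorem ae_pos_gammaLaw {c : ℝ} (hc : 0 < c) : ∀ᵐ u ∂gammaLaw c, 0 < u := by
  simp only [ae_iff, not_lt, gammaLaw_of_pos hc]
  exact gammaMeasure_Iic_zero c 1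

theorem ae_nonneg_gammaLaw (c : ℝ) : ∀ᵐ u ∂gammaLaw c, 0 ≤ u := by
  rcases lt_or_ge 0 c with hc | hc
  · filter_upwards [ae_pos_gammaLaw hc] with u hu using hu.le
  · simp [gammaLaw_of_nonpos hc]

theorem gammaLaw_conv_gammaLaw {a b : ℝ} (ha : 0 ≤ a) (hb : 0 ≤ b) :
    gammaLaw a ∗ gammaLaw b = gammaLaw (a + b) := by
  rcases ha.eq_or_lt with rfl | ha
  · rw [gammaLaw_of_nonpos le_rfl, dirac_zero_conv, zero_add]
  rcases hb.eq_or_lt with rfl | hb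
  · rw [gammaLaw_of_nonpos le_rfl, conv_dirac_zero, add_zero]
  rw [gammaLaw_of_pos ha, gammaLaw_of_pos hb, gammaLaw_of_pos (add_pos ha hb),
    gammaMeasure_conv_gammaMeasure ha hb one_pos]

theorem map_sum_pi_gammaLaw {n : ℕ} (c : Fin n → ℝ) (hc : ∀ i, 0 ≤ c i) :
    (Measure.pi fun i => gammaLaw (c i)).map (fun x => ∑ i, x i) = gammaLaw (∑ i, c i) := by
  induction n with
  | zero => simp [gammaLaw_of_nonpos]
  | succ n ih =>
    have hsplit : (fun x : Fin (n + 1) → ℝ => ∑ i, x i) =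
        (fun p : ℝ × ℝ => p.1 + p.2) ∘ Prod.map id (fun y : Fin n → ℝ => ∑ j, y j) ∘
        MeasurableEquiv.piFinSuccAbove (fun _ => ℝ) 0 := by
      ext x
      simp [Fin.sum_univ_succ, Fin.tail]
    rw [hsplit, ← map_map (by fun_prop) (by fun_prop), ← map_map (by fun_prop) (by fun_prop),
      (measurePreserving_piFinSuccAbove _ 0).map_eq, ← map_prod_map _ _ measurable_id
        (by fun_prop), map_id, ih _ fun j => hc _, Fin.sum_univ_succ]
    exact gammaLaw_conv_gammaLaw (hc 0) (Finset.sum_nonneg fun j _ => hc _)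

theorem ofReal_mul_gammaPDF {c : ℝ} (hc : 0 < c) (u : ℝ) :
    ENNReal.ofReal u * gammaPDF c 1 u = ENNReal.ofReal c * gammaPDF (c + 1) 1 u := by
  rcases lt_trichotomy u 0 with hu | rfl | hu
  · simp [gammaPDF_of_neg hu]
  · simp [gammaPDF_of_nonneg le_rfl, zero_rpow hc.ne']
  · have := Gamma_pos_of_pos hc
    rw [gammaPDF_of_nonneg hu.le, gammaPDF_of_nonneg hu.le, ← ENNReal.ofReal_mul hu.le,
      ← ENNReal.ofReal_mul hc.le, Gamma_add_one hc.ne', add_sub_cancel_right,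
      rpow_sub_one hu.ne']
    simp only [one_rpow]
    congr 1
    field_simp

theorem lintegral_ofReal_mul_gammaLaw {c : ℝ} (hc : 0 < c) {f : ℝ → ℝ≥0∞}
    (hf : Measurable f) :
    ∫⁻ u, ENNReal.ofReal u * f u ∂gammaLaw c
      = ENNReal.ofReal c * ∫⁻ u, f u ∂gammaLaw (c + 1) := by
  rw [gammaLaw_of_pos hc, gammaLaw_of_pos (by linarith), gammaMeasure, gammaMeasure,
    lintegral_withDensity_eq_lintegral_mul _ (measurable_gammaPDF c 1) (by fun_prop),
    lintegral_withDensity_eq_lintegral_mul _ (measurable_gammaPDF (c + 1) 1) hf,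
    ← lintegral_const_mul' _ _ ENNReal.ofReal_ne_top]
  refine lintegral_congr fun u => ?_
  simp only [Pi.mul_apply]
  rw [← mul_assoc, mul_comm (gammaPDF c 1 u), ofReal_mul_gammaPDF hc, mul_assoc]

theorem lintegral_ofReal_inv_gammaLaw {c : ℝ} (hc : 0 < c) :
    ∫⁻ u, ENNReal.ofReal u⁻¹ ∂gammaLaw (c + 1) = ENNReal.ofReal c⁻¹ := by
  have h := lintegral_ofReal_mul_gammaLaw hc (f := fun u => ENNReal.ofReal u⁻¹) (by fun_prop)
  have hone : ∫⁻ u, ENNReal.ofReal u * ENNReal.ofReal u⁻¹ ∂gammaLaw c = 1 := by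
    calc ∫⁻ u, ENNReal.ofReal u * ENNReal.ofReal u⁻¹ ∂gammaLaw c
        = ∫⁻ _, 1 ∂gammaLaw c := by
          refine lintegral_congr_ae ?_
          filter_upwards [ae_pos_gammaLaw hc] with u hu
          rw [← ENNReal.ofReal_mul hu.le, mul_inv_cancel₀ hu.ne', ENNReal.ofReal_one]
      _ = 1 := by simp
  rw [ENNReal.ofReal_inv_of_pos hc]
  exact ENNReal.eq_inv_of_mul_eq_one_left (by rw [mul_comm, ← h, hone])

theorem lintegral_ofReal_div_add_gammaLaw_prod {a b : ℝ} (ha : 0 < a) (hb : 0 ≤ b) :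
    ∫⁻ p, ENNReal.ofReal (p.2 / (p.1 + p.2)) ∂(gammaLaw a).prod (gammaLaw b)
      = ENNReal.ofReal (b / (a + b)) := by
  rcases hb.eq_or_lt with rfl | hb
  · rw [gammaLaw_of_nonpos le_rfl, prod_dirac, lintegral_map (by fun_prop) (by fun_prop)]
    simp
  calc ∫⁻ p, ENNReal.ofReal (p.2 / (p.1 + p.2)) ∂(gammaLaw a).prod (gammaLaw b)
      = ∫⁻ t, ∫⁻ e, ENNReal.ofReal e * ENNReal.ofReal (t + e)⁻¹ ∂gammaLaw b ∂gammaLaw a := by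
        rw [lintegral_prod _ (by fun_prop)]
        refine lintegral_congr fun t => lintegral_congr_ae ?_
        filter_upwards [ae_nonneg_gammaLaw b] with e he
        rw [div_eq_mul_inv, ENNReal.ofReal_mul he]
    _ = ∫⁻ t, ENNReal.ofReal b * ∫⁻ e, ENNReal.ofReal (t + e)⁻¹ ∂gammaLaw (b + 1) ∂gammaLaw a := by
        exact lintegral_congr fun t => lintegral_ofReal_mul_gammaLaw hb (by fun_prop)
    _ = ENNReal.ofReal b * ∫⁻ u, ENNReal.ofReal u⁻¹ ∂(gammaLaw a ∗ gammaLaw (b + 1)) := by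
        rw [lintegral_const_mul _ (by fun_prop), lintegral_conv (by fun_prop)]
    _ = ENNReal.ofReal (b / (a + b)) := by
        rw [gammaLaw_conv_gammaLaw ha.le (by linarith), ← add_assoc,
          lintegral_ofReal_inv_gammaLaw (by positivity), ← ENNReal.ofReal_mul hb.le, div_eq_mul_inv]

theorem MeasureTheory.Measure.pi_conv_pi {ι M : Type*} [Fintype ι] [AddMonoid M] [MeasurableSpace M]
    [MeasurableAdd₂ M] (μ ν : ι → Measure M) [∀ i, IsFiniteMeasure (μ i)]
    [∀ i, IsFiniteMeasure (ν i)] :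
    Measure.pi μ ∗ Measure.pi ν = Measure.pi fun i => μ i ∗ ν i := by
  rw [conv, ← (measurePreserving_arrowProdEquivProdArrow M M ι μ ν).map_eq,
    map_map (by fun_prop) (MeasurableEquiv.measurable _)]
  exact pi_map_pi fun i => measurable_add.aemeasurable

noncomputable def normalizeSum {ι : Type*} [Fintype ι] (g : ι → ℝ) : ι → ℝ :=
  fun i => g i / ∑ j, g j

@[fun_prop]
theorem measurable_normalizeSum {ι : Type*} [Fintype ι] : Measurable (normalizeSum (ι := ι)) :=
  measurable_pi_lambda _ fun i => by unfold normalizeSum; fun_prop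

theorem sum_abs_normalizeSum_sub_le {ι : Type*} [Fintype ι] {g e : ι → ℝ} (hg : ∀ i, 0 ≤ g i)
    (he : ∀ i, 0 ≤ e i) :
    ∑ i, |normalizeSum g i - normalizeSum (g + e) i|
      ≤ 2 * ((∑ i, e i) / (∑ i, g i + ∑ i, e i)) := by
  simp only [normalizeSum, Pi.add_apply, Finset.sum_add_distrib]
  set T := ∑ i, g i
  set E := ∑ i, e i
  have hE : 0 ≤ E := Finset.sum_nonneg fun i _ => he i
  rcases (Finset.sum_nonneg fun i _ => hg i : 0 ≤ T).eq_or_lt with hT | hT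
  · have hg0 : ∀ i, g i = 0 := by
      simpa [T] using (Finset.sum_eq_zero_iff_of_nonneg fun i _ => hg i).1 hT.symm
    rw [show T = 0 from hT.symm]
    simp only [hg0, zero_div, zero_add, zero_sub, abs_neg, abs_div, abs_of_nonneg (he _),
      abs_of_nonneg hE, ← Finset.sum_div]
    linarith [div_nonneg hE hE]
  · have hT : 0 < T := hT
    have hTE : 0 < T + E := by linarith
    have hterm : ∀ i, |g i / T - (g i + e i) / (T + E)| ≤ (e i + E * (g i / T)) / (T + E) := by
      intro i
      rw [show g i / T - (g i + e i) / (T + E) = (E * (g i / T) - e i) / (T + E) by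
        field_simp; ring, abs_div, abs_of_pos hTE]
      gcongr
      have hei := he i
      have hgi : 0 ≤ E * (g i / T) := by have := hg i; positivity
      exact abs_le.2 ⟨by linarith, by linarith⟩
    calc ∑ i, |g i / T - (g i + e i) / (T + E)|
        ≤ ∑ i, (e i + E * (g i / T)) / (T + E) := Finset.sum_le_sum fun i _ => hterm i
      _ = 2 * (E / (T + E)) := by
        rw [← Finset.sum_div, Finset.sum_add_distrib, ← Finset.mul_sum, ← Finset.sum_div,
          div_self hT.ne']
        ring

theorem dirichletLaw_eq_map_pi_gammaLaw {K : ℕ} (α : Fin K → ℝ) (hα : ∀ i, 0 < α i) :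
    dirichletLaw α hα = (Measure.pi fun i => gammaLaw (α i)).map normalizeSum := by
  simp only [dirichletLaw, gammaLaw_of_pos (hα _)]
  rfl

noncomputable def gammaCoupling {K : ℕ} (α β : Fin K → ℝ) :
    Measure ((Fin K → ℝ) × (Fin K → ℝ)) :=
  ((Measure.pi fun i => gammaLaw (α i)).prod (Measure.pi fun i => gammaLaw (β i))).map
    fun q => (normalizeSum q.1, normalizeSum (q.1 + q.2))

instance {K : ℕ} (α β : Fin K → ℝ) : IsProbabilityMeasure (gammaCoupling α β) :=
  isProbabilityMeasure_map (by fun_prop)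

theorem map_fst_gammaCoupling {K : ℕ} {α : Fin K → ℝ} (hα : ∀ i, 0 < α i) (β : Fin K → ℝ) :
    (gammaCoupling α β).map Prod.fst = dirichletLaw α hα := by
  rw [gammaCoupling, map_map measurable_fst (by fun_prop), dirichletLaw_eq_map_pi_gammaLaw,
    show Prod.fst ∘ _ = normalizeSum ∘ Prod.fst from rfl, ← map_map (by fun_prop) measurable_fst,
    map_fst_prod, measure_univ, one_smul]

theorem map_snd_gammaCoupling {K : ℕ} {α β : Fin K → ℝ} (hα : ∀ i, 0 < α i)
    (hβ : ∀ i, 0 ≤ β i) :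
    (gammaCoupling α β).map Prod.snd
      = dirichletLaw (fun i => α i + β i) fun i => add_pos_of_pos_of_nonneg (hα i) (hβ i) := by
  have hsum : ((Measure.pi fun i => gammaLaw (α i)).prod
      (Measure.pi fun i => gammaLaw (β i))).map (fun q => q.1 + q.2)
        = Measure.pi fun i => gammaLaw (α i + β i) := by
    rw [← conv, Measure.pi_conv_pi]
    simp_rw [gammaLaw_conv_gammaLaw (hα _).le (hβ _)]
  rw [gammaCoupling, map_map measurable_snd (by fun_prop), dirichletLaw_eq_map_pi_gammaLaw, ← hsum,
    map_map (by fun_prop) (by fun_prop)]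
  rfl

theorem ae_nonneg_pi_gammaLaw {ι : Type*} [Fintype ι] (c : ι → ℝ) :
    ∀ᵐ x ∂Measure.pi fun i => gammaLaw (c i), ∀ i, 0 ≤ x i :=
  ae_all_iff.2 fun i => tendsto_eval_ae_ae.eventually (ae_nonneg_gammaLaw (c i))

theorem integral_sum_abs_sub_gammaCoupling_le {K : ℕ} {α β : Fin K → ℝ} (hα : ∀ i, 0 ≤ α i)
    (hA : 0 < ∑ i, α i) (hβ : ∀ i, 0 ≤ β i) :
    ∫ p, ∑ i, |p.1 i - p.2 i| ∂gammaCoupling α β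
      ≤ 2 * ((∑ i, β i) / (∑ i, α i + ∑ i, β i)) := by
  have hB : 0 ≤ ∑ i, β i := Finset.sum_nonneg fun i _ => hβ i
  set P := (Measure.pi fun i => gammaLaw (α i)).prod (Measure.pi fun i => gammaLaw (β i))
  have hsums : P.map (fun q => (∑ i, q.1 i, ∑ i, q.2 i))
      = (gammaLaw (∑ i, α i)).prod (gammaLaw (∑ i, β i)) := by
    rw [← map_sum_pi_gammaLaw α hα, ← map_sum_pi_gammaLaw β hβ,
      map_prod_map _ _ (by fun_prop) (by fun_prop)]
    rfl
  have hnonneg : ∀ᵐ q ∂P, (∀ i, 0 ≤ q.1 i) ∧ ∀ i, 0 ≤ q.2 i :=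
    (quasiMeasurePreserving_fst.ae (ae_nonneg_pi_gammaLaw α)).and
      (quasiMeasurePreserving_snd.ae (ae_nonneg_pi_gammaLaw β))
  rw [integral_eq_lintegral_of_nonneg_ae (ae_of_all _ fun p => by positivity) (by fun_prop)]
  refine ENNReal.toReal_le_of_le_ofReal (mul_nonneg zero_le_two (div_nonneg hB (by linarith))) ?_
  calc ∫⁻ p, ENNReal.ofReal (∑ i, |p.1 i - p.2 i|) ∂gammaCoupling α β
      = ∫⁻ q, ENNReal.ofReal (∑ i, |normalizeSum q.1 i - normalizeSum (q.1 + q.2) i|) ∂P :=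
        lintegral_map (by fun_prop) (by fun_prop)
    _ ≤ ∫⁻ q, ENNReal.ofReal 2 *
          ENNReal.ofReal ((∑ i, q.2 i) / (∑ i, q.1 i + ∑ i, q.2 i)) ∂P := by
        refine lintegral_mono_ae ?_
        filter_upwards [hnonneg] with q hq
        rw [← ENNReal.ofReal_mul zero_le_two]
        exact ENNReal.ofReal_le_ofReal (sum_abs_normalizeSum_sub_le hq.1 hq.2)
    _ = ENNReal.ofReal 2 * ∫⁻ p, ENNReal.ofReal (p.2 / (p.1 + p.2))
          ∂(gammaLaw (∑ i, α i)).prod (gammaLaw (∑ i, β i)) := by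
        rw [lintegral_const_mul _ (by fun_prop), ← hsums, lintegral_map (by fun_prop) (by fun_prop)]
    _ = ENNReal.ofReal (2 * ((∑ i, β i) / (∑ i, α i + ∑ i, β i))) := by
        rw [lintegral_ofReal_div_add_gammaLaw_prod hA hB,
          ENNReal.ofReal_mul zero_le_two]

theorem div_add_le_log_one_add_div {a b : ℝ} (ha : 0 < a) (hb : 0 ≤ b) :
    b / (a + b) ≤ log (1 + b / a) :=
  calc b / (a + b) = 1 - (1 + b / a)⁻¹ := by field_simp; ring
    _ ≤ log (1 + b / a) := one_sub_inv_le_log_of_pos (by positivity)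

end

/-- There is a coupling of `Dirichlet(α)` and `Dirichlet(α + m)` (with `m` a vector of
nonnegative integers) whose expected `ℓ¹` distance is at most
`2 ln(1 + (∑ i m i) / (∑ i α i))`; equivalently the `ℓ¹`-Wasserstein distance between the
two Dirichlet laws is at most this bound. -/
theorem dirichlet_wasserstein_bound {K : ℕ} (hK : 0 < K)
    (α : Fin K → ℝ) (hα : ∀ i, 0 < α i) (m : Fin K → ℕ) :
    ∃ π : Measure ((Fin K → ℝ) × (Fin K → ℝ)),
      IsProbabilityMeasure π ∧
      π.map Prod.fst = dirichletLaw α hα ∧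
      π.map Prod.snd = dirichletLaw (fun i => α i + m i)
        (fun i => add_pos_of_pos_of_nonneg (hα i) (Nat.cast_nonneg _)) ∧
      (∫ p, ∑ i, |p.1 i - p.2 i| ∂π)
        ≤ 2 * Real.log (1 + (∑ i, (m i : ℝ)) / ∑ i, α i) := by
  have hA : 0 < ∑ i, α i :=
    Finset.sum_pos (fun i _ => hα i) (Finset.univ_nonempty_iff.2 ⟨⟨0, hK⟩⟩)
  have hm : ∀ i, (0 : ℝ) ≤ m i := fun i => Nat.cast_nonneg _
  refine ⟨gammaCoupling α (fun i => m i), inferInstance, map_fst_gammaCoupling hα _,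
    map_snd_gammaCoupling hα hm, ?_⟩
  calc _ ≤ 2 * ((∑ i, (m i : ℝ)) / (∑ i, α i + ∑ i, (m i : ℝ))) :=
        integral_sum_abs_sub_gammaCoupling_le (fun i => (hα i).le) hA hm
    _ ≤ _ := by
        gcongr
        exact div_add_le_log_one_add_div hA (Finset.sum_nonneg fun i _ => hm i)
end

section
/- Let c : S × A × S → ℝ with |c| ≤ C̄, let γ ∈ (0,1), and define the Bellman operator (JV)(s) = min over a of β(σ(c(s,a,·) + γV(·), p(·|s,a))), where β is a coherent risk measure over a distribution on transition kernels p and σ(·, m) is a coherent risk measure with respect to the probability vector m. Then J is a γ-contraction in the sup norm: ‖J V₁ − J V₂‖_∞ ≤ γ‖V₁ − V₂‖_∞ for all bounded V₁, V₂ on the finite state space S. -/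
/-!
Each layer of the Bellman operator — the risk transition mapping `σ(·, m)`, the outer risk
measure `β` and the minimum over actions — is monotone and commutes with adding constants.
Such a functional moves by at most `r` when its argument is raised pointwise by at most `r`.
If `V₁ ≤ V₂ + M` pointwise then `c + γ V₁ ≤ (c + γ V₂) + γ M`, and pushing this through the
three layers gives `J V₁ ≤ J V₂ + γ M`; exchanging `V₁` and `V₂` bounds `|J V₁ - J V₂|`.
-/

structure IsMonotoneTranslationInvariant {X : Type*} (ρ : (X → ℝ) → ℝ) : Prop where
  mono : Monotone ρ
  map_add_const : ∀ (f : X → ℝ) (r : ℝ), ρ (fun x => f x + r) = ρ f + r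

namespace IsMonotoneTranslationInvariant

variable {X : Type*} {ρ : (X → ℝ) → ℝ}

theorem le_add_of_le_add (hρ : IsMonotoneTranslationInvariant ρ) {f g : X → ℝ} {r : ℝ}
    (h : ∀ x, f x ≤ g x + r) : ρ f ≤ ρ g + r :=
  hρ.map_add_const g r ▸ hρ.mono h

theorem iInf [Finite X] [Nonempty X] :
    IsMonotoneTranslationInvariant (fun f : X → ℝ => ⨅ x, f x) where
  mono _ _ h := ciInf_mono (Finite.bddBelow_range _) h
  map_add_const f r := (ciInf_add (Finite.bddBelow_range f) r).symm

end IsMonotoneTranslationInvariant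

open IsMonotoneTranslationInvariant in
theorem bellman_contraction_general {S A P : Type*} [Fintype S] [Nonempty S] [Fintype A] [Nonempty A]
    (c : S → A → S → ℝ)
    (γ : ℝ) (hγ : γ ∈ Set.Ioo (0 : ℝ) 1)
    (ker : P → S → A → S → ℝ)
    (β : (P → ℝ) → ℝ)
    (hβmono : ∀ f g : P → ℝ, (∀ p, f p ≤ g p) → β f ≤ β g)
    (hβtrans : ∀ (f : P → ℝ) (r : ℝ), β (fun p => f p + r) = β f + r)
    (σ : (S → ℝ) → (S → ℝ) → ℝ)
    (hσmono : ∀ v₁ v₂ m : S → ℝ, (∀ s', v₁ s' ≤ v₂ s') → σ v₁ m ≤ σ v₂ m)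
    (hσtrans : ∀ (v m : S → ℝ) (r : ℝ), σ (fun s' => v s' + r) m = σ v m + r)
    (J : (S → ℝ) → S → ℝ)
    (hJ : ∀ V s, J V s
        = ⨅ a : A, β (fun p => σ (fun s' => c s a s' + γ * V s') (ker p s a)))
    (V₁ V₂ : S → ℝ) :
    (⨆ s, |J V₁ s - J V₂ s|) ≤ γ * ⨆ s, |V₁ s - V₂ s| := by
  set M := ⨆ s, |V₁ s - V₂ s|
  have hM (s : S) : |V₁ s - V₂ s| ≤ M :=
    le_ciSup (f := fun s => |V₁ s - V₂ s|) (Finite.bddAbove_range _) s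
  have hβ : IsMonotoneTranslationInvariant β := ⟨fun f g => hβmono f g, hβtrans⟩
  have hσ (m : S → ℝ) : IsMonotoneTranslationInvariant (σ · m) :=
    ⟨fun v₁ v₂ => hσmono v₁ v₂ m, fun v r => hσtrans v m r⟩
  have hJ_sub_le {W₁ W₂ : S → ℝ} (hW : ∀ s', W₁ s' - W₂ s' ≤ M) (s : S) :
      J W₁ s - J W₂ s ≤ γ * M := by
    rw [hJ, hJ, sub_le_iff_le_add']
    refine iInf.le_add_of_le_add fun a => hβ.le_add_of_le_add fun p =>
      (hσ _).le_add_of_le_add fun s' => ?_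
    nlinarith [hW s', hγ.1]
  exact ciSup_le fun s => abs_sub_le_iff.mpr
    ⟨hJ_sub_le (fun s' => (abs_sub_le_iff.mp (hM s')).1) s,
      hJ_sub_le (fun s' => (abs_sub_le_iff.mp (hM s')).2) s⟩

/-- The risk-sensitive robust Bellman operator
`(J V)(s) = min_a β(p ↦ σ(c(s,a,·) + γ V(·), p(·|s,a)))`, built from a coherent outer risk
measure `β` (over transition-kernel uncertainty) and a coherent risk transition mapping
`σ(·, m)`, is a `γ`-contraction in the sup norm. -/
theorem bellman_contraction {S A P : Type*} [Fintype S] [Nonempty S] [Fintype A] [Nonempty A]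
    (c : S → A → S → ℝ) (Cbar : ℝ) (hc : ∀ s a s', |c s a s'| ≤ Cbar)
    (γ : ℝ) (hγ : γ ∈ Set.Ioo (0 : ℝ) 1)
    (ker : P → S → A → S → ℝ)
    (β : (P → ℝ) → ℝ)
    (hβpos : ∀ (r : ℝ) (f : P → ℝ), 0 ≤ r → β (fun p => r * f p) = r * β f)
    (hβmono : ∀ f g : P → ℝ, (∀ p, f p ≤ g p) → β f ≤ β g)
    (hβtrans : ∀ (f : P → ℝ) (r : ℝ), β (fun p => f p + r) = β f + r)
    (hβsub : ∀ f g : P → ℝ, β (fun p => f p + g p) ≤ β f + β g)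
    (σ : (S → ℝ) → (S → ℝ) → ℝ)
    (hσpos : ∀ (r : ℝ) (v m : S → ℝ), 0 ≤ r → σ (fun s' => r * v s') m = r * σ v m)
    (hσmono : ∀ v₁ v₂ m : S → ℝ, (∀ s', v₁ s' ≤ v₂ s') → σ v₁ m ≤ σ v₂ m)
    (hσtrans : ∀ (v m : S → ℝ) (r : ℝ), σ (fun s' => v s' + r) m = σ v m + r)
    (hσsub : ∀ v₁ v₂ m : S → ℝ, σ (fun s' => v₁ s' + v₂ s') m ≤ σ v₁ m + σ v₂ m)
    (J : (S → ℝ) → S → ℝ)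
    (hJ : ∀ V s, J V s
        = ⨅ a : A, β (fun p => σ (fun s' => c s a s' + γ * V s') (ker p s a)))
    (V₁ V₂ : S → ℝ) :
    (⨆ s, |J V₁ s - J V₂ s|) ≤ γ * ⨆ s, |V₁ s - V₂ s| :=
  bellman_contraction_general c γ hγ ker β hβmono hβtrans σ hσmono hσtrans J hJ V₁ V₂
end

section
/- Let σ(v,m) = min over y ∈ ℝ of { y + (1/α)·∑_{s'} (v(s') − y)⁺ m(s') } denote CVaR_α of the vector v under probability vector m on a finite set S. If ‖v‖_∞ ≤ C, then for any two probability vectors m₁, m₂ on S, |σ(v, m₁) − σ(v, m₂)| ≤ (2C/α)·∑_{s'} |m₁(s') − m₂(s')|. -/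
/-!
Write `f_m(y) = y + α⁻¹ ∑ (v s - y)⁺ m s` for the CVaR objective. Since `α ≤ 1`, `f_m` is
antitone below `min v` and equals `y` above `max v`, so every value of `f_m` is dominated by a value
at some `z ∈ [-C, C]`. There `0 ≤ (v s - z)⁺ ≤ 2C`, so `f_{m₁} z` and `f_{m₂} z` differ by at most
`(2C/α) ∑ |m₁ s - m₂ s|`, and this bound passes to the infima.
-/

open Finset

lemma ciInf_sub_le_ciInf_of_forall_exists_le {ι : Type*} [Nonempty ι] {f g : ι → ℝ} {ε : ℝ}
    (hf : BddBelow (Set.range f)) (hfg : ∀ i, ∃ j, f j ≤ g i + ε) :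
    (⨅ i, f i) - ε ≤ ⨅ i, g i :=
  le_ciInf fun i => by
    obtain ⟨j, hj⟩ := hfg i
    linarith [ciInf_le hf j]

lemma abs_ciInf_sub_ciInf_le {ι : Type*} [Nonempty ι] {f g : ι → ℝ} {ε : ℝ}
    (hf : BddBelow (Set.range f)) (hg : BddBelow (Set.range g))
    (hfg : ∀ i, ∃ j, f j ≤ g i + ε) (hgf : ∀ i, ∃ j, g j ≤ f i + ε) :
    |(⨅ i, f i) - ⨅ i, g i| ≤ ε := by
  have := ciInf_sub_le_ciInf_of_forall_exists_le hf hfg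
  have := ciInf_sub_le_ciInf_of_forall_exists_le hg hgf
  rw [abs_sub_le_iff]
  constructor <;> linarith

lemma abs_sum_mul_sub_sum_mul_le {ι : Type*} (t : Finset ι) {g m₁ m₂ : ι → ℝ} {B : ℝ}
    (hg : ∀ i ∈ t, |g i| ≤ B) :
    |∑ i ∈ t, g i * m₁ i - ∑ i ∈ t, g i * m₂ i| ≤ B * ∑ i ∈ t, |m₁ i - m₂ i| := by
  rw [← sum_sub_distrib, mul_sum]
  refine (abs_sum_le_sum_abs _ _).trans (sum_le_sum fun i hi => ?_)
  rw [← mul_sub, abs_mul]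
  exact mul_le_mul_of_nonneg_right (hg i hi) (abs_nonneg _)

section CVaR

variable {S : Type*} [Fintype S] {α C : ℝ} {v m m₁ m₂ : S → ℝ}

noncomputable def cvarObjective (α : ℝ) (v m : S → ℝ) (y : ℝ) : ℝ :=
  y + (1 / α) * ∑ s, max (v s - y) 0 * m s

lemma le_cvarObjective (hα : 0 ≤ α) (hm : ∀ s, 0 ≤ m s) (y : ℝ) :
    y ≤ cvarObjective α v m y := by
  have : 0 ≤ ∑ s, max (v s - y) 0 * m s :=
    sum_nonneg fun s _ => mul_nonneg (le_max_right _ _) (hm s)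
  unfold cvarObjective
  have : 0 ≤ 1 / α := by positivity
  nlinarith

lemma cvarObjective_eq_of_forall_le {z : ℝ} (hz : ∀ s, v s ≤ z) : cvarObjective α v m z = z := by
  simp [cvarObjective, max_eq_right (sub_nonpos.mpr (hz _))]

lemma cvarObjective_antitoneOn (hα₀ : 0 < α) (hα₁ : α ≤ 1) (hm : ∀ s, 0 ≤ m s)
    (hm₁ : ∑ s, m s = 1) : AntitoneOn (cvarObjective α v m) {z | ∀ s, z ≤ v s} := by
  intro y _ z hz hyz
  -- `(v s - y)⁺ ≥ (v s - z)⁺ + (z - y)`, and the extra mass `(z - y)/α` beats the gain `z - y`.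
  have hsum : ∑ s, max (v s - z) 0 * m s + (z - y) ≤ ∑ s, max (v s - y) 0 * m s := by
    calc ∑ s, max (v s - z) 0 * m s + (z - y)
        = ∑ s, (v s - y) * m s := by
          simp_rw [max_eq_left (sub_nonneg.mpr (hz _))]
          rw [← mul_one (z - y), ← hm₁, mul_sum, ← sum_add_distrib]
          exact sum_congr rfl fun s _ => by ring
      _ ≤ ∑ s, max (v s - y) 0 * m s :=
          sum_le_sum fun s _ => mul_le_mul_of_nonneg_right (le_max_left _ _) (hm s)
  have hα : 1 ≤ 1 / α := by rw [le_div_iff₀ hα₀]; linarith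
  unfold cvarObjective
  nlinarith [mul_le_mul_of_nonneg_left hsum (by positivity : 0 ≤ 1 / α)]

lemma exists_abs_le_cvarObjective_le (hα₀ : 0 < α) (hα₁ : α ≤ 1) (hC : 0 ≤ C)
    (hv : ∀ s, |v s| ≤ C) (hm : ∀ s, 0 ≤ m s) (hm₁ : ∑ s, m s = 1) (y : ℝ) :
    ∃ z, |z| ≤ C ∧ cvarObjective α v m z ≤ cvarObjective α v m y := by
  rcases le_total y (-C) with hy | hy
  · exact ⟨-C, by rw [abs_neg, abs_of_nonneg hC],
      cvarObjective_antitoneOn hα₀ hα₁ hm hm₁ (fun s => hy.trans (abs_le.mp (hv s)).1)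
        (fun s => (abs_le.mp (hv s)).1) hy⟩
  rcases le_total y C with hy' | hy'
  · exact ⟨y, abs_le.mpr ⟨hy, hy'⟩, le_rfl⟩
  · refine ⟨C, by rw [abs_of_nonneg hC], ?_⟩
    rw [cvarObjective_eq_of_forall_le fun s => (abs_le.mp (hv s)).2]
    exact hy'.trans (le_cvarObjective hα₀.le hm y)

lemma cvarObjective_bddBelow (hα₀ : 0 < α) (hα₁ : α ≤ 1) (hC : 0 ≤ C)
    (hv : ∀ s, |v s| ≤ C) (hm : ∀ s, 0 ≤ m s) (hm₁ : ∑ s, m s = 1) :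
    BddBelow (Set.range (cvarObjective α v m)) := by
  refine ⟨-C, ?_⟩
  rintro _ ⟨y, rfl⟩
  obtain ⟨z, hzC, hz⟩ := exists_abs_le_cvarObjective_le hα₀ hα₁ hC hv hm hm₁ y
  linarith [(abs_le.mp hzC).1, le_cvarObjective (v := v) hα₀.le hm z]

lemma abs_cvarObjective_sub_le (hα : 0 < α) (hv : ∀ s, |v s| ≤ C) {z : ℝ} (hz : |z| ≤ C) :
    |cvarObjective α v m₁ z - cvarObjective α v m₂ z| ≤ (2 * C / α) * ∑ s, |m₁ s - m₂ s| := by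
  have hpos : ∀ s ∈ (univ : Finset S), |max (v s - z) 0| ≤ 2 * C := fun s _ => by
    rw [abs_of_nonneg (le_max_right _ _)]
    exact max_le (by linarith [(abs_le.mp (hv s)).2, (abs_le.mp hz).1])
      (by linarith [abs_nonneg z])
  have := abs_sum_mul_sub_sum_mul_le univ (m₁ := m₁) (m₂ := m₂) hpos
  calc |cvarObjective α v m₁ z - cvarObjective α v m₂ z|
      = (1 / α) * |∑ s, max (v s - z) 0 * m₁ s - ∑ s, max (v s - z) 0 * m₂ s| := by
        rw [cvarObjective, cvarObjective, add_sub_add_left_eq_sub, ← mul_sub, abs_mul,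
          abs_of_pos (by positivity)]
    _ ≤ (1 / α) * (2 * C * ∑ s, |m₁ s - m₂ s|) := by gcongr
    _ = (2 * C / α) * ∑ s, |m₁ s - m₂ s| := by ring

lemma exists_cvarObjective_le_add (hα₀ : 0 < α) (hα₁ : α ≤ 1) (hC : 0 ≤ C)
    (hv : ∀ s, |v s| ≤ C) (hm₂ : ∀ s, 0 ≤ m₂ s) (hm₂sum : ∑ s, m₂ s = 1) (y : ℝ) :
    ∃ z, cvarObjective α v m₁ z ≤
      cvarObjective α v m₂ y + (2 * C / α) * ∑ s, |m₁ s - m₂ s| := by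
  obtain ⟨z, hzC, hz⟩ := exists_abs_le_cvarObjective_le hα₀ hα₁ hC hv hm₂ hm₂sum y
  have hdiff := abs_cvarObjective_sub_le (m₁ := m₁) (m₂ := m₂) hα₀ hv hzC
  exact ⟨z, by linarith [(abs_le.mp hdiff).2]⟩

end CVaR

/-- CVaR as a risk transition mapping,
`σ(v, m) = min_y { y + (1/α) ∑_{s'} (v s' - y)⁺ m s' }`, is Lipschitz in the probability
vector `m`: if `‖v‖_∞ ≤ C` then
`|σ(v, m₁) - σ(v, m₂)| ≤ (2C/α) ∑_{s'} |m₁ s' - m₂ s'|`. -/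
theorem cvar_lipschitz_in_measure {S : Type*} [Fintype S] [Nonempty S]
    (α : ℝ) (hα : α ∈ Set.Ioo (0 : ℝ) 1)
    (C : ℝ) (v : S → ℝ) (hv : ∀ s, |v s| ≤ C)
    (m₁ m₂ : S → ℝ)
    (hm₁nonneg : ∀ s, 0 ≤ m₁ s) (hm₁sum : ∑ s, m₁ s = 1)
    (hm₂nonneg : ∀ s, 0 ≤ m₂ s) (hm₂sum : ∑ s, m₂ s = 1) :
    |(⨅ y : ℝ, y + (1 / α) * ∑ s, max (v s - y) 0 * m₁ s)
        - ⨅ y : ℝ, y + (1 / α) * ∑ s, max (v s - y) 0 * m₂ s|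
      ≤ (2 * C / α) * ∑ s, |m₁ s - m₂ s| := by
  obtain ⟨hα₀, hα₁⟩ := hα
  have hC : 0 ≤ C := (abs_nonneg _).trans (hv (Classical.arbitrary S))
  have hsymm : ∑ s, |m₂ s - m₁ s| = ∑ s, |m₁ s - m₂ s| := by simp_rw [abs_sub_comm]
  refine abs_ciInf_sub_ciInf_le (f := cvarObjective α v m₁) (g := cvarObjective α v m₂)
    (cvarObjective_bddBelow hα₀ hα₁.le hC hv hm₁nonneg hm₁sum)
    (cvarObjective_bddBelow hα₀ hα₁.le hC hv hm₂nonneg hm₂sum)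
    (exists_cvarObjective_le_add hα₀ hα₁.le hC hv hm₂nonneg hm₂sum) fun y => ?_
  rw [← hsymm]
  exact exists_cvarObjective_le_add hα₀ hα₁.le hC hv hm₁nonneg hm₁sum y
end

section
/- Let J_1 and J_2 be γ-contractions in sup norm with fixed points V_1* and V_2*, and suppose the pointwise deviation bound |J_1 V(s) − J_2 V(s)| ≤ ε holds for all V with ‖V‖_∞ ≤ C̄/(1−γ) and all s. Then ‖V_1* − V_2*‖_∞ ≤ ε/(1−γ). In particular (Theorem on posterior error), if the one-step Bellman operators under posterior χ and under the true kernel δ_q̄ differ by at most B_σ·max_{s,a} β_{p∼χ}(∑_{s'} |p(s'|s,a) − q̄(s'|s,a)|) on all admissible value functions, then ‖V*_χ − V*_{δ_q̄}‖_∞ ≤ (B_σ/(1−γ))·max_{s,a} β_{p∼χ}(∑_{s'} |p(s'|s,a) − q̄(s'|s,a)|). -/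
open Function

theorem norm_sub_le_div_of_isFixedPt {E : Type*} [SeminormedAddCommGroup E] {f g : E → E}
    {γ ε : ℝ} (hγ : γ < 1) (hf : ∀ x y, ‖f x - f y‖ ≤ γ * ‖x - y‖) {x y : E}
    (hx : IsFixedPt f x) (hy : IsFixedPt g y) (hfg : ‖f y - g y‖ ≤ ε) :
    ‖x - y‖ ≤ ε / (1 - γ) := by
  have hrec : ‖x - y‖ ≤ γ * ‖x - y‖ + ε :=
    calc ‖x - y‖ = ‖(f x - f y) + (f y - g y)‖ := by rw [hx.eq, hy.eq, sub_add_sub_cancel]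
      _ ≤ ‖f x - f y‖ + ‖f y - g y‖ := norm_add_le _ _
      _ ≤ γ * ‖x - y‖ + ε := add_le_add (hf x y) hfg
  rw [le_div_iff₀ (sub_pos.2 hγ)]
  linarith

theorem posterior_error_bound_general {S : Type*} [Fintype S] [Nonempty S]
    (γ : ℝ) (hγ : γ ∈ Set.Ioo (0 : ℝ) 1) (Cbar : ℝ)
    (J₁ J₂ : (S → ℝ) → S → ℝ)
    (hJ₁ : ∀ V₁ V₂ : S → ℝ, ‖J₁ V₁ - J₁ V₂‖ ≤ γ * ‖V₁ - V₂‖)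
    (V₁star V₂star : S → ℝ)
    (hfix₁ : J₁ V₁star = V₁star) (hfix₂ : J₂ V₂star = V₂star)
    (hball₂ : ‖V₂star‖ ≤ Cbar / (1 - γ))
    (ε : ℝ)
    (hdev : ∀ V : S → ℝ, ‖V‖ ≤ Cbar / (1 - γ) → ∀ s, |J₁ V s - J₂ V s| ≤ ε) :
    ‖V₁star - V₂star‖ ≤ ε / (1 - γ) := by
  refine norm_sub_le_div_of_isFixedPt hγ.2 hJ₁ hfix₁ hfix₂ ?_
  exact (pi_norm_le_iff_of_nonempty _).2 fun s ↦ by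
    simpa only [Pi.sub_apply, Real.norm_eq_abs] using hdev V₂star hball₂ s

/-- Posterior error bound: if `J₁` and `J₂` are `γ`-contractions in sup norm whose fixed
points `V₁*`, `V₂*` lie in the ball of radius `C̄/(1-γ)`, and
`|J₁ V s - J₂ V s| ≤ ε` for all admissible value functions `V` (those with
`‖V‖_∞ ≤ C̄/(1-γ)`) and all states `s`, then `‖V₁* - V₂*‖_∞ ≤ ε / (1 - γ)`.
In the risk-sensitive robust MDP, with
`ε = B_σ · max_{s,a} β_{p∼χ}(∑_{s'} |p(s'|s,a) - q̄(s'|s,a)|)`, this is the posterior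
error bound `‖V*_χ - V*_{δ_q̄}‖_∞ ≤ (B_σ/(1-γ)) · max_{s,a} β_{p∼χ}(∑_{s'} |p - q̄|)`. -/
theorem posterior_error_bound {S : Type*} [Fintype S] [Nonempty S]
    (γ : ℝ) (hγ : γ ∈ Set.Ioo (0 : ℝ) 1) (Cbar : ℝ)
    (J₁ J₂ : (S → ℝ) → S → ℝ)
    (hJ₁ : ∀ V₁ V₂ : S → ℝ, ‖J₁ V₁ - J₁ V₂‖ ≤ γ * ‖V₁ - V₂‖)
    (hJ₂ : ∀ V₁ V₂ : S → ℝ, ‖J₂ V₁ - J₂ V₂‖ ≤ γ * ‖V₁ - V₂‖)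
    (V₁star V₂star : S → ℝ)
    (hfix₁ : J₁ V₁star = V₁star) (hfix₂ : J₂ V₂star = V₂star)
    (hball₁ : ‖V₁star‖ ≤ Cbar / (1 - γ)) (hball₂ : ‖V₂star‖ ≤ Cbar / (1 - γ))
    (ε : ℝ)
    (hdev : ∀ V : S → ℝ, ‖V‖ ≤ Cbar / (1 - γ) → ∀ s, |J₁ V s - J₂ V s| ≤ ε) :
    ‖V₁star - V₂star‖ ≤ ε / (1 - γ) :=
  posterior_error_bound_general γ hγ Cbar J₁ J₂ hJ₁ V₁star V₂star hfix₁ hfix₂ hball₂ ε hdev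
end
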